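/- arXiv:quant-ph/0501044 — 3 statements merged into one kernel-verified Lean document; each statement's English description precedes it below -/
import Mathlib

section
/- For any fixed r ∈ ℤ/N with r ≠ 0 and 2r ≠ 0, the sum over x ∈ (ℤ/N)^k of η_r^x · η_{−r}^x equals (2^k − 1)(2^k − 2) N^{k−2}. -/
open Finset

/-- The subset sum `b · x = ∑ j, b j * x j` over `ℤ/N`. -/
def dotP {N k : ℕ} (b : Fin k → Bool) (x : Fin k → ZMod N) : ZMod N :=
  ∑ j, if b j then x j else 0

/-- `η_r^x`: the number of bit strings `b ∈ {0,1}^k` with `b · x ≡ r (mod N)`. -/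
def etaN {N k : ℕ} (r : ZMod N) (x : Fin k → ZMod N) : ℕ :=
  (Finset.univ.filter fun b : Fin k → Bool => dotP b x = r).card

/-!
Expanding the product, the sum counts triples `(b, c, x)` with `b · x = r` and `c · x = -r`.
Since `r ≠ 0` and `r ≠ -r`, such a triple forces `b` and `c` to be nonzero and distinct. For
distinct nonzero `b, c` there is a coordinate `j` in the support of one of them but not of the
other, and a coordinate `i` in the support of the other; using the unit vectors at `i` and `j`,
`x ↦ (b · x, c · x)` is a surjective homomorphism onto `(ℤ/N)²`, so each fibre has `N^(k-2)`
elements, and there are `(2^k - 1)(2^k - 2)` such pairs.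
-/

variable {N k : ℕ}

lemma dotP_add (b : Fin k → Bool) (x y : Fin k → ZMod N) :
    dotP b (x + y) = dotP b x + dotP b y := by
  simp only [dotP, Pi.add_apply, ← sum_add_distrib]
  exact sum_congr rfl fun j _ => by split_ifs <;> simp

lemma dotP_single (b : Fin k → Bool) (i : Fin k) (a : ZMod N) :
    dotP b (Pi.single i a) = if b i then a else 0 := by
  rw [dotP, sum_eq_single i (fun j _ hji => by simp [hji]) (by simp)]
  simp

lemma dotP_bot (x : Fin k → ZMod N) : dotP ⊥ x = 0 := by
  simp [dotP]

def pairHom (b c : Fin k → Bool) : (Fin k → ZMod N) →+ ZMod N × ZMod N :=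
  AddMonoidHom.mk' (fun x => (dotP b x, dotP c x)) fun x y => by simp [dotP_add]

lemma pairHom_surjective {b c : Fin k → Bool} {i j : Fin k} (hbj : b j) (hcj : c j = false)
    (hci : c i) : Function.Surjective (pairHom (N := N) b c) := by
  rintro ⟨u, v⟩
  refine ⟨Pi.single i v + Pi.single j (u - dotP b (Pi.single i v)), ?_⟩
  simp [pairHom, dotP_add, dotP_single, hbj, hcj, hci]

lemma AddMonoidHom.card_fiber_mul_card_of_surjective {G H : Type*} [AddGroup G] [Fintype G]
    [AddMonoid H] [Fintype H] [DecidableEq H] (f : G →+ H) (hf : Function.Surjective f) (y : H) :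
    #{x | f x = y} * Fintype.card H = Fintype.card G := by
  calc #{x | f x = y} * Fintype.card H = ∑ z, #{x | f x = z} := by
        rw [sum_congr rfl fun z _ => card_fiber_eq_of_mem_range f (hf z) (hf y), sum_const,
          card_univ, smul_eq_mul, mul_comm]
    _ = Fintype.card G := (card_eq_sum_card_fiberwise fun x _ => mem_univ (f x)).symm

lemma sum_card_filter_mul_card_filter {α β γ : Type*} [Fintype α] [Fintype β] [Fintype γ]
    (P : β → α → Prop) (Q : γ → α → Prop) [∀ b x, Decidable (P b x)] [∀ c x, Decidable (Q c x)] :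
    ∑ x, #{b | P b x} * #{c | Q c x} = ∑ b, ∑ c, #{x | P b x ∧ Q c x} := by
  simp only [card_filter, sum_mul_sum, ite_zero_mul_ite_zero, mul_one]
  rw [sum_comm]
  exact sum_congr rfl fun b _ => sum_comm

lemma sum_sum_ite_ne_ne {α : Type*} [Fintype α] [DecidableEq α] (a : α) (m : ℕ) :
    ∑ b : α, ∑ c : α, (if b ≠ a ∧ c ≠ a ∧ b ≠ c then m else 0) =
      (Fintype.card α - 1) * (Fintype.card α - 2) * m := by
  have hoff : ({p | p.1 ≠ a ∧ p.2 ≠ a ∧ p.1 ≠ p.2} : Finset (α × α)) = (univ.erase a).offDiag := by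
    ext; simp
  rw [← sum_product' (f := fun b c => if b ≠ a ∧ c ≠ a ∧ b ≠ c then m else 0), univ_product_univ,
    sum_ite, sum_const_zero, add_zero, sum_const, smul_eq_mul, hoff, offDiag_card,
    card_erase_of_mem (mem_univ a), card_univ, ← Nat.mul_sub_one]
  grind

lemma exists_eq_true_of_ne_bot {ι : Type*} {c : ι → Bool} (hc : c ≠ ⊥) : ∃ i, c i := by
  by_contra! h
  exact hc (funext fun i => by simpa using h i)

lemma card_dotP_eq_and_dotP_eq [NeZero N] {b c : Fin k → Bool} (hb : b ≠ ⊥) (hc : c ≠ ⊥)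
    (hbc : b ≠ c) (u v : ZMod N) : #{x | dotP b x = u ∧ dotP c x = v} = N ^ (k - 2) := by
  obtain ⟨j, hj⟩ := Function.ne_iff.mp hbc
  wlog hbj : b j generalizing b c u v
  · have hcj : c j := by simpa [hbj] using hj.symm
    rw [← this hc hb hbc.symm v u (Ne.symm hj) hcj]
    simp only [and_comm]
  have hcj : c j = false := by simpa [hbj] using hj.symm
  obtain ⟨i, hci⟩ := exists_eq_true_of_ne_bot hc
  have hij : i ≠ j := by rintro rfl; simp_all
  have hk : 1 < k := by simpa using Fintype.one_lt_card_iff.mpr ⟨i, j, hij⟩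
  have hfiber := (pairHom b c).card_fiber_mul_card_of_surjective
    (pairHom_surjective (N := N) hbj hcj hci) (u, v)
  simp only [pairHom, AddMonoidHom.mk'_apply, Prod.mk.injEq, Fintype.card_prod, ZMod.card,
    Fintype.card_fun, Fintype.card_fin] at hfiber
  rw [← sq, show N ^ k = N ^ (k - 2) * N ^ 2 by rw [← pow_add, Nat.sub_add_cancel hk]] at hfiber
  exact Nat.eq_of_mul_eq_mul_right (Nat.pos_of_neZero (N ^ 2)) hfiber

lemma card_dotP_eq_and_dotP_eq_neg [NeZero N] {r : ZMod N} (hr : r ≠ 0) (hr2 : 2 * r ≠ 0)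
    (b c : Fin k → Bool) :
    #{x | dotP b x = r ∧ dotP c x = -r} = if b ≠ ⊥ ∧ c ≠ ⊥ ∧ b ≠ c then N ^ (k - 2) else 0 := by
  split_ifs with h
  · exact card_dotP_eq_and_dotP_eq h.1 h.2.1 h.2.2 r (-r)
  refine card_eq_zero.mpr (filter_eq_empty_iff.mpr fun x _ ⟨hbx, hcx⟩ => h ⟨?_, ?_, ?_⟩)
  · rintro rfl
    exact hr (by simpa [dotP_bot] using hbx.symm)
  · rintro rfl
    exact hr (by simpa [dotP_bot] using hcx)
  · rintro rfl
    exact hr2 (by rw [two_mul]; nth_rw 2 [← hbx]; rw [hcx, add_neg_cancel])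

theorem sum_eta_mul_eta_neg_general {N k : ℕ} [NeZero N]
    (r : ZMod N) (hr : r ≠ 0) (hr2 : 2 * r ≠ 0) :
    ∑ x : Fin k → ZMod N, etaN r x * etaN (-r) x = (2 ^ k - 1) * (2 ^ k - 2) * N ^ (k - 2) := by
  simp only [etaN, sum_card_filter_mul_card_filter, card_dotP_eq_and_dotP_eq_neg hr hr2,
    sum_sum_ite_ne_ne, Fintype.card_fun, Fintype.card_bool, Fintype.card_fin]

/-- For `r ≠ 0` with `2r ≠ 0`, `∑_x η_r^x η_{-r}^x = (2^k-1)(2^k-2) N^(k-2)`. -/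
theorem sum_eta_mul_eta_neg {N k : ℕ} [NeZero N] (hN : 3 ≤ N) (hk : 2 ≤ k)
    (r : ZMod N) (hr : r ≠ 0) (hr2 : 2 * r ≠ 0) :
    ∑ x : Fin k → ZMod N, etaN r x * etaN (-r) x = (2 ^ k - 1) * (2 ^ k - 2) * N ^ (k - 2) :=
  sum_eta_mul_eta_neg_general r hr hr2
end

section
/- With ρ_d := (1/(2N)^k) Σ_{x} Σ_{p,q ∈ ℤ/N} ω^{d(p−q)} √(η_p^x η_q^x) |S_p^x,x⟩⟨S_q^x,x| and E_j as defined, the success probability tr(E_d ρ_d) is independent of d and equals (1/(2^k N^{k+1})) Σ_{x ∈ (ℤ/N)^k} (Σ_{r ∈ ℤ/N} √(η_r^x))². -/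
open Finset
open scoped ComplexOrder

noncomputable section

/-- `ω^a` where `ω = exp(2πi/N)` and `a ∈ ℤ/N`. -/
def wpow (N : ℕ) (a : ZMod N) : ℂ :=
  Complex.exp (2 * Real.pi * Complex.I * (a.val : ℂ) / N)

/-- The normalized subset-sum state `|S_r^x⟩ = η_r^{x,-1/2} ∑_{b·x = r} |b⟩` (the zero vector
when `η_r^x = 0`), as a vector in `ℂ^{2^k}`. -/
def Sstate {N k : ℕ} (r : ZMod N) (x : Fin k → ZMod N) : (Fin k → Bool) → ℂ :=
  fun b => if dotP b x = r then ((Real.sqrt (etaN r x))⁻¹ : ℝ) else 0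

/-- The vector `|S_r^x, x⟩` in `ℂ^{(2N)^k}`, with basis `|b, y⟩`. -/
def ketS {N k : ℕ} (r : ZMod N) (x : Fin k → ZMod N) :
    (Fin k → Bool) × (Fin k → ZMod N) → ℂ :=
  fun i => if i.2 = x then Sstate r x i.1 else 0

/-- The outer product `|u⟩⟨v|`. -/
def outerM {N k : ℕ} (u v : (Fin k → Bool) × (Fin k → ZMod N) → ℂ) :
    Matrix ((Fin k → Bool) × (Fin k → ZMod N)) ((Fin k → Bool) × (Fin k → ZMod N)) ℂ :=
  Matrix.of fun i j => u i * star (v j)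

/-- The pretty good measurement operators
`E_j = (1/N) ∑_x ∑_{p,q} ω^{j(p-q)} |S_p^x,x⟩⟨S_q^x,x|`. -/
def Emeas {k : ℕ} (N : ℕ) [NeZero N] (j : ZMod N) :
    Matrix ((Fin k → Bool) × (Fin k → ZMod N)) ((Fin k → Bool) × (Fin k → ZMod N)) ℂ :=
  (N : ℂ)⁻¹ • ∑ x : Fin k → ZMod N, ∑ p : ZMod N, ∑ q : ZMod N,
    wpow N (j * (p - q)) • outerM (ketS p x) (ketS q x)

/-- `k` copies of the dihedral hidden subgroup state for the subgroup `{e, r s^d}`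
(after the Fourier transform):
`ρ_d^{⊗k} = (2N)^{-k} ∑_x ∑_{p,q} ω^{d(p-q)} √(η_p^x η_q^x) |S_p^x,x⟩⟨S_q^x,x|`. -/
def rhod {k : ℕ} (N : ℕ) [NeZero N] (d : ZMod N) :
    Matrix ((Fin k → Bool) × (Fin k → ZMod N)) ((Fin k → Bool) × (Fin k → ZMod N)) ℂ :=
  ((2 * (N : ℂ)) ^ k)⁻¹ • ∑ x : Fin k → ZMod N, ∑ p : ZMod N, ∑ q : ZMod N,
    (wpow N (d * (p - q)) * (Real.sqrt ((etaN p x : ℝ) * (etaN q x : ℝ)) : ℝ)) •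
      outerM (ketS p x) (ketS q x)

lemma wpow_mul_wpow_neg (N : ℕ) [NeZero N] (a : ZMod N) : wpow N a * wpow N (-a) = 1 := by
  have hN : (N : ℂ) ≠ 0 := Nat.cast_ne_zero.mpr (NeZero.ne N)
  rw [wpow, wpow, ← Complex.exp_add]
  by_cases h : a = 0
  · simp [h]
  · have hv : ((-a).val : ℂ) = (N : ℂ) - (a.val : ℂ) := by
      rw [ZMod.neg_val, if_neg h]
      push_cast [Nat.cast_sub (ZMod.val_le a)]
      ring
    rw [hv]
    have : 2 * (Real.pi:ℂ) * Complex.I * (a.val : ℂ) / N +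
        2 * (Real.pi:ℂ) * Complex.I * ((N:ℂ) - (a.val:ℂ)) / N = 2 * (Real.pi:ℂ) * Complex.I := by
      field_simp
      ring
    rw [this]
    simpa using Complex.exp_int_mul_two_pi_mul_I 1

lemma trace_outer_mul_outer {N k : ℕ} [NeZero N]
    (u v u' v' : (Fin k → Bool) × (Fin k → ZMod N) → ℂ) :
    (outerM (N := N) u v * outerM u' v').trace =
      (∑ i, star (v i) * u' i) * (∑ i, star (v' i) * u i) := by
  simp only [Matrix.trace, Matrix.diag, Matrix.mul_apply, outerM, Matrix.of_apply]
  rw [Finset.sum_mul_sum, Finset.sum_comm]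
  exact Finset.sum_congr rfl fun i _ => Finset.sum_congr rfl fun l _ => by ring

lemma ip_Sstate {N k : ℕ} [NeZero N] (r s : ZMod N) (x : Fin k → ZMod N) :
    ∑ b, star (Sstate r x b) * Sstate s x b =
      if r = s ∧ etaN r x ≠ 0 then 1 else 0 := by
  by_cases hrs : r = s
  · subst hrs
    have hsum : ∑ b : Fin k → Bool, star (Sstate r x b) * Sstate r x b =
        ∑ b : Fin k → Bool, (if dotP b x = r then ((etaN r x : ℂ))⁻¹ else 0) := by
      refine Finset.sum_congr rfl fun b _ => ?_
      simp only [Sstate]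
      by_cases hb : dotP b x = r
      · simp only [hb, if_pos, Complex.star_def, Complex.conj_ofReal]
        rw [← Complex.ofReal_mul, ← mul_inv, Real.mul_self_sqrt (Nat.cast_nonneg _)]
        push_cast
        ring
      · simp [hb]
    rw [hsum, Finset.sum_ite, Finset.sum_const_zero, add_zero, Finset.sum_const,
      nsmul_eq_mul]
    rw [show (Finset.univ.filter fun b : Fin k → Bool => dotP b x = r).card = etaN r x from rfl]
    by_cases h0 : etaN r x = 0
    · simp [h0]
    · rw [if_pos ⟨rfl, h0⟩, mul_inv_cancel₀ (by exact_mod_cast h0)]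
  · rw [if_neg (by simp [hrs])]
    refine Finset.sum_eq_zero fun b _ => ?_
    simp only [Sstate]
    by_cases hb : dotP b x = r
    · have hs : dotP b x ≠ s := fun hs => hrs (hb ▸ hs)
      simp [hs]
    · simp [hb]

lemma ip_ketS {N k : ℕ} [NeZero N] (r s : ZMod N) (x x' : Fin k → ZMod N) :
    ∑ i : (Fin k → Bool) × (Fin k → ZMod N), star (ketS r x i) * ketS s x' i =
      if x = x' ∧ r = s ∧ etaN r x ≠ 0 then 1 else 0 := by
  rw [Fintype.sum_prod_type_right]
  by_cases hx : x = x'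
  · subst hx
    rw [Finset.sum_eq_single x]
    · simp only [ketS, if_pos rfl, if_true]
      rw [ip_Sstate]
      simp
    · intro y _ hy
      refine Finset.sum_eq_zero fun b _ => ?_
      simp [ketS, hy]
    · simp
  · rw [if_neg (by simp [hx])]
    refine Finset.sum_eq_zero fun y _ => Finset.sum_eq_zero fun b _ => ?_
    simp only [ketS]
    by_cases h1 : y = x <;> by_cases h2 : y = x' <;> simp_all


lemma sum_ite_c {α β : Type*} [Fintype α] [AddCommMonoid β] (c : Prop) [Decidable c]
    (f g : α → β) :
    ∑ x : α, (if c then f x else g x) = if c then ∑ x : α, f x else ∑ x : α, g x := by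
  split <;> rfl

/-- The success probability `tr(E_d ρ_d)` is independent of `d` and equals
`(1/(2^k N^(k+1))) ∑_x (∑_r √(η_r^x))²`. -/
theorem success_prob_formula {N k : ℕ} [NeZero N] (hk : 1 ≤ k) (d : ZMod N) :
    (Emeas (k := k) N d * rhod (k := k) N d).trace =
      (((1 / ((2 : ℝ) ^ k * (N : ℝ) ^ (k + 1))) *
        ∑ x : Fin k → ZMod N, (∑ r : ZMod N, Real.sqrt (etaN r x)) ^ 2 : ℝ) : ℂ) := by
  have hN : (N : ℂ) ≠ 0 := Nat.cast_ne_zero.mpr (NeZero.ne N)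
  simp only [Emeas, rhod, Matrix.smul_mul, Matrix.mul_smul, smul_smul,
    Matrix.sum_mul, Matrix.mul_sum, Matrix.trace_sum, Matrix.trace_smul,
    smul_eq_mul, Finset.mul_sum]
  simp only [trace_outer_mul_outer, ip_ketS, ite_and, mul_ite, ite_mul, mul_zero, zero_mul,
    mul_one, one_mul, Finset.sum_ite_eq, Finset.sum_ite_eq', Finset.mem_univ, if_true,
    sum_ite_c, Finset.sum_const_zero]
  have key : ∀ (x : Fin k → ZMod N) (p q : ZMod N),
      (if etaN q x ≠ 0 then
        if etaN p x ≠ 0 then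
          ((2 * (N:ℂ)) ^ k)⁻¹ *
            (wpow N (d * (p - q)) * (Real.sqrt ((etaN p x : ℝ) * (etaN q x : ℝ)) : ℂ) * ((N:ℂ))⁻¹ *
              wpow N (d * (q - p)))
        else 0 else 0) =
      ((2 * (N:ℂ)) ^ k)⁻¹ * ((N:ℂ))⁻¹ *
        ((Real.sqrt (etaN p x) : ℂ) * (Real.sqrt (etaN q x) : ℂ)) := by
    intro x p q
    by_cases hq : etaN q x = 0
    · simp [hq]
    by_cases hp : etaN p x = 0
    · simp [hp]
    rw [if_pos hq, if_pos hp]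
    have hw : wpow N (d * (p - q)) * wpow N (d * (q - p)) = 1 := by
      have h2 : d * (q - p) = -(d * (p - q)) := by ring
      rw [h2]; exact wpow_mul_wpow_neg N _
    have hs : Real.sqrt ((etaN p x : ℝ) * (etaN q x : ℝ)) =
        Real.sqrt (etaN p x) * Real.sqrt (etaN q x) := Real.sqrt_mul (Nat.cast_nonneg _) _
    rw [hs]
    rw [show ((2 * (N:ℂ)) ^ k)⁻¹ *
        (wpow N (d * (p - q)) * ((Real.sqrt (etaN p x) * Real.sqrt (etaN q x) : ℝ) : ℂ) * ((N:ℂ))⁻¹ *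
          wpow N (d * (q - p))) =
        ((2 * (N:ℂ)) ^ k)⁻¹ * ((N:ℂ))⁻¹ *
          ((Real.sqrt (etaN p x) : ℂ) * (Real.sqrt (etaN q x) : ℂ)) *
          (wpow N (d * (p - q)) * wpow N (d * (q - p))) from by push_cast; ring]
    rw [hw, mul_one]
  simp only [key]
  have hxsum : ∀ x : Fin k → ZMod N,
      ∑ p : ZMod N, ∑ q : ZMod N, ((2 * (N:ℂ)) ^ k)⁻¹ * ((N:ℂ))⁻¹ *
        ((Real.sqrt (etaN p x) : ℂ) * (Real.sqrt (etaN q x) : ℂ)) =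
      ((2 * (N:ℂ)) ^ k)⁻¹ * ((N:ℂ))⁻¹ * ((∑ r : ZMod N, (Real.sqrt (etaN r x) : ℂ)) ^ 2) := by
    intro x
    rw [sq, Finset.sum_mul_sum, Finset.mul_sum]
    exact Finset.sum_congr rfl fun p _ => by rw [Finset.mul_sum]
  simp only [hxsum]
  rw [← Finset.mul_sum]
  push_cast
  rw [show ((2 * (N:ℂ)) ^ k)⁻¹ * ((N:ℂ))⁻¹ = 1 / ((2:ℂ) ^ k * (N:ℂ) ^ (k + 1)) from by
    rw [mul_pow, pow_succ]; field_simp]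
  rw [Finset.mul_sum]
end
end

section
/- G := Σ_{j ∈ ℤ/N} ρ_j^{⊗k} equals (N/(2N)^k) Σ_{x ∈ (ℤ/N)^k} Σ_{r ∈ ℤ/N} η_r^x |S_r^x,x⟩⟨S_r^x,x|; in particular G is diagonal in the basis {|S_r^x,x⟩} and rank G = |{(x,r) : η_r^x > 0}|. -/
open Finset
open scoped ComplexOrder

noncomputable section

/-! Summing `ρ_j` over `j`, orthogonality of the characters `j ↦ ω^{j(p-q)}` kills every term
with `p ≠ q`. The surviving operator has `(i, i')` entry `1` exactly when the basis vectors
`i = |b, y⟩` and `i' = |b', y'⟩` carry the same label `(y, b·y)`, and `0` otherwise. Such a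
"same fibre" matrix is `B Bᴴ` for the 0/1 matrix `B` of the labelling, so its rank is that of
the Gram matrix `Bᴴ B`, which is diagonal with the fibre sizes `η_r^x` on the diagonal. -/

section SameFiber

variable {ι κ R : Type*} [DecidableEq κ]

def graphIndicator [Zero R] [One R] (f : ι → κ) : Matrix ι κ R :=
  Matrix.of fun i s => if f i = s then 1 else 0

def sameFiber [Zero R] [One R] (f : ι → κ) : Matrix ι ι R :=
  Matrix.of fun i j => if f i = f j then 1 else 0

open Matrix

lemma graphIndicator_mul_conjTranspose [Fintype κ] [Semiring R] [StarRing R] (f : ι → κ) :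
    (graphIndicator f : Matrix ι κ R) * (graphIndicator f : Matrix ι κ R)ᴴ =
      (sameFiber f : Matrix ι ι R) := by
  ext i j
  rw [mul_apply]
  simp [graphIndicator, sameFiber, apply_ite star, eq_comm]

lemma conjTranspose_graphIndicator_mul [Fintype ι] [Semiring R] [StarRing R] (f : ι → κ) :
    (graphIndicator f : Matrix ι κ R)ᴴ * (graphIndicator f : Matrix ι κ R) =
      diagonal fun s => (#{i | f i = s} : R) := by
  ext s t
  rw [mul_apply]
  by_cases hst : s = t
  · subst hst
    simp [graphIndicator, apply_ite star, ← ite_and, Finset.sum_boole]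
  · rw [diagonal_apply_ne _ hst]
    refine Finset.sum_eq_zero fun i _ => ?_
    simp only [graphIndicator, conjTranspose_apply, of_apply]
    split_ifs <;> simp_all

lemma rank_sameFiber [Fintype ι] [Fintype κ] [Field R] [PartialOrder R] [StarRing R]
    [StarOrderedRing R] [CharZero R] (f : ι → κ) :
    (sameFiber f : Matrix ι ι R).rank = #(univ.image f) := by
  classical
  rw [← graphIndicator_mul_conjTranspose, rank_self_mul_conjTranspose,
    ← rank_conjTranspose_mul_self, conjTranspose_graphIndicator_mul, rank_diagonal,
    Fintype.card_subtype]
  congr 1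
  ext s
  simp

end SameFiber

lemma wpow_eq_stdAddChar {N : ℕ} [NeZero N] (a : ZMod N) : wpow N a = ZMod.stdAddChar a := by
  rw [ZMod.stdAddChar_apply, ZMod.toCircle_apply]
  rfl

lemma sum_wpow_mul {N : ℕ} [NeZero N] (a : ZMod N) :
    ∑ j : ZMod N, wpow N (j * a) = if a = 0 then (N : ℂ) else 0 := by
  simp_rw [wpow_eq_stdAddChar]
  rw [AddChar.sum_mulShift _ (ZMod.isPrimitive_stdAddChar N), ZMod.card,
    Nat.cast_ite, Nat.cast_zero]

lemma sum_wpow_mul_sub_smul {N : ℕ} [NeZero N] {M : Type*} [AddCommGroup M] [Module ℂ M]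
    (f : ZMod N → ZMod N → M) :
    ∑ j : ZMod N, ∑ p, ∑ q, wpow N (j * (p - q)) • f p q = (N : ℂ) • ∑ p, f p p := by
  calc ∑ j : ZMod N, ∑ p, ∑ q, wpow N (j * (p - q)) • f p q
      = ∑ p, ∑ q, (∑ j : ZMod N, wpow N (j * (p - q))) • f p q := by
        rw [Finset.sum_comm]
        refine Finset.sum_congr rfl fun p _ => ?_
        rw [Finset.sum_comm]
        simp only [Finset.sum_smul]
    _ = (N : ℂ) • ∑ p, f p p := by
        simp [sum_wpow_mul, sub_eq_zero, Finset.smul_sum]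

def subsetSumClass {N k : ℕ} (i : (Fin k → Bool) × (Fin k → ZMod N)) :
    (Fin k → ZMod N) × ZMod N :=
  (i.2, dotP i.1 i.2)

lemma ketS_apply {N k : ℕ} (r : ZMod N) (x : Fin k → ZMod N)
    (i : (Fin k → Bool) × (Fin k → ZMod N)) :
    ketS r x i =
      if subsetSumClass i = (x, r) then (((Real.sqrt (etaN r x))⁻¹ : ℝ) : ℂ) else 0 := by
  obtain ⟨b, y⟩ := i
  by_cases hy : y = x
  · subst hy
    simp [ketS, Sstate, subsetSumClass]
  · simp [ketS, subsetSumClass, hy]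

lemma etaN_pos_of_subsetSumClass_eq {N k : ℕ} {i : (Fin k → Bool) × (Fin k → ZMod N)}
    {x : Fin k → ZMod N} {r : ZMod N} (h : subsetSumClass i = (x, r)) : 0 < etaN r x := by
  simp only [subsetSumClass, Prod.mk.injEq] at h
  obtain ⟨rfl, rfl⟩ := h
  exact Finset.card_pos.mpr ⟨i.1, by simp⟩

lemma etaN_mul_ketS_mul_star_ketS {N k : ℕ} (r : ZMod N) (x : Fin k → ZMod N)
    (i j : (Fin k → Bool) × (Fin k → ZMod N)) :
    (etaN r x : ℂ) * (ketS r x i * star (ketS r x j)) =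
      if subsetSumClass i = (x, r) ∧ subsetSumClass j = (x, r) then 1 else 0 := by
  simp only [ketS_apply]
  split_ifs with hi
  · have hη : (etaN r x : ℂ) ≠ 0 := by exact_mod_cast (etaN_pos_of_subsetSumClass_eq hi).ne'
    rw [Complex.star_def, Complex.conj_ofReal, ← Complex.ofReal_mul, ← mul_inv,
      Real.mul_self_sqrt (Nat.cast_nonneg _)]
    push_cast
    exact mul_inv_cancel₀ hη
  all_goals simp_all

open Matrix in
lemma sum_etaN_smul_outerM_ketS {N k : ℕ} [NeZero N] :
    ∑ x : Fin k → ZMod N, ∑ r : ZMod N, (etaN r x : ℂ) • outerM (ketS r x) (ketS r x) =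
      sameFiber subsetSumClass := by
  ext i j
  simp only [Matrix.sum_apply, Matrix.smul_apply, outerM, of_apply, smul_eq_mul,
    etaN_mul_ketS_mul_star_ketS]
  rw [← Fintype.sum_prod_type' (f := fun x r =>
    if subsetSumClass i = (x, r) ∧ subsetSumClass j = (x, r) then (1 : ℂ) else 0)]
  simp [sameFiber, ite_and, eq_comm]

lemma image_subsetSumClass {N k : ℕ} [NeZero N] :
    univ.image (subsetSumClass (N := N) (k := k)) =
      univ.filter fun xr : (Fin k → ZMod N) × ZMod N => 0 < etaN xr.2 xr.1 := by
  ext ⟨x, r⟩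
  simp only [mem_image, mem_univ, true_and, mem_filter]
  constructor
  · rintro ⟨i, hi⟩
    exact etaN_pos_of_subsetSumClass_eq hi
  · intro hη
    obtain ⟨b, hb⟩ := Finset.card_pos.mp hη
    exact ⟨(b, x), by simpa [subsetSumClass] using hb⟩

lemma sum_rhod {N k : ℕ} [NeZero N] :
    ∑ j : ZMod N, rhod (k := k) N j =
      ((N : ℂ) / (2 * (N : ℂ)) ^ k) • ∑ x : Fin k → ZMod N, ∑ r : ZMod N,
        (etaN r x : ℂ) • outerM (ketS r x) (ketS r x) := by
  have hcollapse (x : Fin k → ZMod N) :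
      ∑ j : ZMod N, ∑ p, ∑ q,
        (wpow N (j * (p - q)) * (Real.sqrt ((etaN p x : ℝ) * (etaN q x : ℝ)) : ℝ)) •
          outerM (ketS p x) (ketS q x) =
        (N : ℂ) • ∑ r, (etaN r x : ℂ) • outerM (ketS r x) (ketS r x) := by
    simp_rw [mul_smul, sum_wpow_mul_sub_smul, Real.sqrt_mul_self (Nat.cast_nonneg _),
      Complex.ofReal_natCast]
  simp_rw [rhod, ← Finset.smul_sum]
  rw [Finset.sum_comm]
  simp_rw [hcollapse, ← Finset.smul_sum, smul_smul, div_eq_inv_mul]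

theorem G_diagonal_and_rank_general {N k : ℕ} [NeZero N] :
    (∑ j : ZMod N, rhod (k := k) N j =
        ((N : ℂ) / (2 * (N : ℂ)) ^ k) • ∑ x : Fin k → ZMod N, ∑ r : ZMod N,
          (etaN r x : ℂ) • outerM (ketS r x) (ketS r x)) ∧
      (∑ j : ZMod N, rhod (k := k) N j).rank =
        (Finset.univ.filter fun xr : (Fin k → ZMod N) × ZMod N => 0 < etaN xr.2 xr.1).card := by
  have hc : (N : ℂ) / (2 * (N : ℂ)) ^ k ≠ 0 := by simp [NeZero.ne N]
  refine ⟨sum_rhod, ?_⟩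
  rw [sum_rhod, sum_etaN_smul_outerM_ketS,
    Matrix.rank_smul_of_mem_nonZeroDivisors _ (mem_nonZeroDivisors_of_ne_zero hc),
    rank_sameFiber, image_subsetSumClass]

/-- `G = ∑_j ρ_j^{⊗k} = (N/(2N)^k) ∑_x ∑_r η_r^x |S_r^x,x⟩⟨S_r^x,x|`; it is diagonal in the
subset-sum basis and `rank G = |{(x,r) : η_r^x > 0}|`. -/
theorem G_diagonal_and_rank {N k : ℕ} [NeZero N] (hk : 1 ≤ k) :
    (∑ j : ZMod N, rhod (k := k) N j =
        ((N : ℂ) / (2 * (N : ℂ)) ^ k) • ∑ x : Fin k → ZMod N, ∑ r : ZMod N,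
          (etaN r x : ℂ) • outerM (ketS r x) (ketS r x)) ∧
      (∑ j : ZMod N, rhod (k := k) N j).rank =
        (Finset.univ.filter fun xr : (Fin k → ZMod N) × ZMod N => 0 < etaN xr.2 xr.1).card :=
  G_diagonal_and_rank_general
end
end
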